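/- arXiv:1811.04308 — 2 statements merged into one kernel-verified Lean document; each statement's English description precedes it below -/
import Mathlib

section
/- Let f ∈ H² be not identically zero and let g be an inner function in H², i.e., a holomorphic function on 𝔻 such that multiplication by g is an isometry of H² (gh ∈ H² and ‖gh‖_{H²} = ‖h‖_{H²} for every h ∈ H²). Then for every n ∈ ℕ, the optimal polynomial approximants satisfy Q_n(1/(fg)) = conj(g(0)) · Q_n(1/f). -/
open MeasureTheory Filter Metric Polynomial

noncomputable section

/-- The Hardy space `H²`, modelled as the space `ℓ²(ℕ, ℂ)` of square-summable
Taylor-coefficient sequences: `f : H2` represents the holomorphic function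
`z ↦ ∑ₖ f k * z ^ k` on the unit disc, and the `lp`-norm of `f` is its `H²` norm. -/
abbrev H2 := lp (fun _ : ℕ => ℂ) 2

/-- Value at `z` of the holomorphic function with Taylor coefficients `f`. -/
def h2Val (f : H2) (z : ℂ) : ℂ := ∑' k, f k * z ^ k

/-- `n`-th Taylor coefficient of the product of a polynomial `q` with the power series
having coefficients `a`. -/
def coeffMul (q : Polynomial ℂ) (a : ℕ → ℂ) (n : ℕ) : ℂ :=
  ∑ j ∈ Finset.range (n + 1), q.coeff j * a (n - j)

/-- Taylor coefficients of `q·f − 1`. -/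
def errSeq (q : Polynomial ℂ) (f : H2) (n : ℕ) : ℂ :=
  coeffMul q (fun k => f k) n - if n = 0 then 1 else 0

/-- The `H²` norm `‖q·f − 1‖_{H²}`. -/
def h2ErrNorm (q : Polynomial ℂ) (f : H2) : ℝ :=
  Real.sqrt (∑' n, ‖errSeq q f n‖ ^ 2)

/-- `Q` is an optimal polynomial approximant of order `n` of `1/f`: it has degree at
most `n` and minimizes `‖q·f − 1‖_{H²}` over all polynomials `q` of degree at most `n`. -/
def IsOpa (n : ℕ) (f : H2) (Q : Polynomial ℂ) : Prop :=
  Q.degree ≤ (n : WithBot ℕ) ∧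
    ∀ q : Polynomial ℂ, q.degree ≤ (n : WithBot ℕ) → h2ErrNorm Q f ≤ h2ErrNorm q f

open Classical in
/-- The optimal polynomial approximant `Q_n(1/f)` (well defined whenever the minimizer
exists and is unique, which is the case for every `f ≠ 0`). -/
def opa (n : ℕ) (f : H2) : Polynomial ℂ :=
  if h : ∃! Q : Polynomial ℂ, IsOpa n f Q then h.choose else 0

/-- Sup-distance of two functions over a set `E` (the distance in `C(E)`). -/
def supDist (E : Set ℂ) (u v : ℂ → ℂ) : ℝ := ⨆ z : E, ‖u z - v z‖

/-- `f` has universal optimal polynomial approximants on `E`: every continuous function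
on `E` is the uniform limit on `E` of a subsequence of the sequence `Q_n(1/f)`. -/
def HasUniversalOpa (E : Set ℂ) (f : H2) : Prop :=
  ∀ g : ℂ → ℂ, ContinuousOn g E →
    ∃ m : ℕ → ℕ, StrictMono m ∧
      TendstoUniformlyOn (fun s z => (opa (m s) f).eval z) g atTop E

/-- `E ⊆ 𝕋` has arc-length (Lebesgue) measure zero. -/
def circleNull (E : Set ℂ) : Prop :=
  volume {θ : ℝ | Complex.exp (θ * Complex.I) ∈ E} = 0

/-- Coefficients of the product of the power series with coefficients `g` and the power
series with coefficients `a` (Cauchy product). -/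
def convSeq (g : ℕ → ℂ) (a : ℕ → ℂ) (n : ℕ) : ℂ :=
  ∑ j ∈ Finset.range (n + 1), g j * a (n - j)

/-! Multiplication by an inner function `g` is an isometry of `H²` whose adjoint sends `1` to
`conj (g 0)`. Expanding the squares therefore gives, for every `u ∈ H²`,
`‖g u - 1‖² = ‖u - conj (g 0)‖² + 1 - |g 0|²`. Taking `u = q f`, minimising `‖q (g f) - 1‖` over
`deg q ≤ n` amounts to projecting `conj (g 0) • 1` orthogonally onto `{q f : deg q ≤ n}`, and by
linearity of the projection the minimiser is `conj (g 0) • Q_n(1/f)`. -/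

open scoped InnerProductSpace ComplexConjugate

section InnerProductSpace

variable {𝕜 E F : Type*} [RCLike 𝕜] [NormedAddCommGroup E] [InnerProductSpace 𝕜 E]
  [NormedAddCommGroup F] [InnerProductSpace 𝕜 F]

theorem Submodule.starProjection_eq_iff_forall_norm_sub_le (K : Submodule 𝕜 E)
    [K.HasOrthogonalProjection] {u v : E} (hv : v ∈ K) :
    K.starProjection u = v ↔ ∀ w ∈ K, ‖u - v‖ ≤ ‖u - w‖ := by
  have hbdd : BddBelow (Set.range fun w : K => ‖u - w‖) :=
    ⟨0, by rintro _ ⟨w, rfl⟩; positivity⟩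
  constructor
  · rintro rfl w hw
    rw [K.starProjection_minimal]
    exact ciInf_le hbdd ⟨w, hw⟩
  · intro h
    refine K.eq_starProjection_of_mem_of_inner_eq_zero hv
      ((K.norm_eq_iInf_iff_inner_eq_zero hv).1 ?_)
    exact le_antisymm (le_ciInf fun w => h w w.2) (ciInf_le hbdd ⟨v, hv⟩)

theorem Submodule.norm_sub_starProjection_le (K : Submodule 𝕜 E) [K.HasOrthogonalProjection]
    (u : E) {w : E} (hw : w ∈ K) : ‖u - K.starProjection u‖ ≤ ‖u - w‖ :=
  (K.starProjection_eq_iff_forall_norm_sub_le (K.starProjection_apply_mem u)).1 rfl w hw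

theorem norm_sub_sq_eq_of_norm_eq_of_inner_eq {x e : E} {y v : F} (hxy : ‖x‖ = ‖y‖)
    (hinner : ⟪x, e⟫_𝕜 = ⟪y, v⟫_𝕜) :
    ‖x - e‖ ^ 2 = ‖y - v‖ ^ 2 + (‖e‖ ^ 2 - ‖v‖ ^ 2) := by
  rw [@norm_sub_sq 𝕜, @norm_sub_sq 𝕜, hxy, hinner]
  ring

theorem norm_sub_le_norm_sub_iff_of_norm_eq_of_inner_eq {M : F → E} {e : E} {v : F}
    (hM : ∀ u, ‖M u‖ = ‖u‖) (hMe : ∀ u, ⟪M u, e⟫_𝕜 = ⟪u, v⟫_𝕜) (u u' : F) :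
    ‖M u - e‖ ≤ ‖M u' - e‖ ↔ ‖u - v‖ ≤ ‖u' - v‖ := by
  rw [← sq_le_sq₀ (norm_nonneg _) (norm_nonneg _), ← sq_le_sq₀ (norm_nonneg _) (norm_nonneg _),
    norm_sub_sq_eq_of_norm_eq_of_inner_eq (hM u) (hMe u),
    norm_sub_sq_eq_of_norm_eq_of_inner_eq (hM u') (hMe u'), add_le_add_iff_right]

end InnerProductSpace

section Shift

variable {E : Type*}

def seqShift [Zero E] (j : ℕ) (a : ℕ → E) (k : ℕ) : E := if j ≤ k then a (k - j) else 0

@[simp]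
theorem seqShift_add_self [Zero E] (j : ℕ) (a : ℕ → E) (k : ℕ) : seqShift j a (k + j) = a k := by
  simp [seqShift]

theorem Memℓp.seqShift [NormedAddCommGroup E] {p : ENNReal} (hp : 0 < p.toReal) {a : ℕ → E}
    (ha : Memℓp a p) (j : ℕ) : Memℓp (seqShift j a) p := by
  rw [memℓp_gen_iff hp] at ha ⊢
  exact (summable_nat_add_iff j).1 (by simpa using ha)

end Shift

theorem PowerSeries.mk_coeffMul (q : ℂ[X]) (a : ℕ → ℂ) :
    PowerSeries.mk (coeffMul q a) = (q : PowerSeries ℂ) * PowerSeries.mk a := by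
  ext k
  rw [coeff_mk, coeff_mul, Finset.Nat.sum_antidiagonal_eq_sum_range_succ_mk]
  simp [coeffMul, Polynomial.coeff_coe]

theorem PowerSeries.mk_convSeq (g a : ℕ → ℂ) :
    PowerSeries.mk (convSeq g a) = PowerSeries.mk g * PowerSeries.mk a := by
  ext k
  rw [coeff_mk, coeff_mul, Finset.Nat.sum_antidiagonal_eq_sum_range_succ_mk]
  simp [convSeq]

theorem coeffMul_eq_coeff_mul (q : ℂ[X]) (a : ℕ → ℂ) (k : ℕ) :
    coeffMul q a k = PowerSeries.coeff k ((q : PowerSeries ℂ) * PowerSeries.mk a) := by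
  rw [← PowerSeries.mk_coeffMul, PowerSeries.coeff_mk]

theorem coeffMul_add (p q : ℂ[X]) (a : ℕ → ℂ) :
    coeffMul (p + q) a = coeffMul p a + coeffMul q a := by
  ext k
  simp [coeffMul_eq_coeff_mul, add_mul]

theorem coeffMul_smul (c : ℂ) (q : ℂ[X]) (a : ℕ → ℂ) :
    coeffMul (c • q) a = c • coeffMul q a := by
  ext k
  simp [coeffMul_eq_coeff_mul, Polynomial.smul_eq_C_mul, mul_assoc]

theorem coeffMul_monomial (j : ℕ) (c : ℂ) (a : ℕ → ℂ) :
    coeffMul (monomial j c) a = c • seqShift j a := by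
  rw [← Polynomial.C_mul_X_pow_eq_monomial, ← smul_eq_C_mul, coeffMul_smul]
  ext k
  simp [coeffMul_eq_coeff_mul, PowerSeries.coeff_X_pow_mul', seqShift]

theorem coeffMul_convSeq (q : ℂ[X]) (g a : ℕ → ℂ) :
    coeffMul q (convSeq g a) = convSeq g (coeffMul q a) := by
  ext k
  rw [coeffMul_eq_coeff_mul, ← PowerSeries.coeff_mk k (convSeq g _), PowerSeries.mk_convSeq,
    PowerSeries.mk_convSeq, PowerSeries.mk_coeffMul, mul_left_comm]

theorem Memℓp.coeffMul {p : ENNReal} (hp : 0 < p.toReal) (q : ℂ[X]) {a : ℕ → ℂ}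
    (ha : Memℓp a p) : Memℓp (coeffMul q a) p := by
  induction q using Polynomial.induction_on' with
  | add q r hq hr => rw [coeffMul_add]; exact hq.add hr
  | monomial j c => rw [coeffMul_monomial]; exact (ha.seqShift hp j).const_smul c

namespace H2

def polyMul (f : H2) : ℂ[X] →ₗ[ℂ] H2 where
  toFun q := ⟨coeffMul q f, (lp.memℓp f).coeffMul (by norm_num) q⟩
  map_add' p q := lp.ext (coeffMul_add p q f)
  map_smul' c q := lp.ext (coeffMul_smul c q f)

theorem coe_polyMul (f : H2) (q : ℂ[X]) : ⇑(polyMul f q) = coeffMul q f := rfl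

theorem polyMul_injective {f : H2} (hf : f ≠ 0) : Function.Injective (polyMul f) := by
  rw [← LinearMap.ker_eq_bot, LinearMap.ker_eq_bot']
  intro q hq
  have hmk : PowerSeries.mk ⇑f ≠ 0 := fun h => hf (lp.ext (funext fun k => by
    simpa using congrArg (PowerSeries.coeff k) h))
  have : (q : PowerSeries ℂ) * PowerSeries.mk f = 0 := by
    rw [← PowerSeries.mk_coeffMul, ← coe_polyMul, hq, lp.coeFn_zero]
    rfl
  exact_mod_cast (mul_eq_zero.1 this).resolve_right hmk

def one : H2 := lp.single 2 0 1

theorem norm_eq_sqrt_tsum (x : H2) : ‖x‖ = √(∑' k, ‖x k‖ ^ 2) := by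
  rw [lp.norm_eq_tsum_rpow (by norm_num), Real.sqrt_eq_rpow]
  norm_num

theorem h2ErrNorm_eq_norm (q : ℂ[X]) (f : H2) : h2ErrNorm q f = ‖polyMul f q - one‖ := by
  rw [norm_eq_sqrt_tsum, h2ErrNorm]
  congr! 4 with k
  rw [lp.coeFn_sub, Pi.sub_apply, coe_polyMul, one, lp.single_apply, Pi.single_apply, errSeq]

def polyMulSpace (n : ℕ) (f : H2) : Submodule ℂ H2 := (degreeLE ℂ n).map (polyMul f)

instance (n : ℕ) (f : H2) : FiniteDimensional ℂ (polyMulSpace n f) := by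
  rw [polyMulSpace, ← degreeLT_succ_eq_degreeLE]
  exact Module.Finite.map _ _

theorem isOpa_iff_starProjection_eq {n : ℕ} {f : H2} {Q : ℂ[X]} :
    IsOpa n f Q ↔ Q ∈ degreeLE ℂ n ∧ (polyMulSpace n f).starProjection one = polyMul f Q := by
  simp only [IsOpa, h2ErrNorm_eq_norm, ← mem_degreeLE]
  refine and_congr_right fun hQ => ?_
  rw [(polyMulSpace n f).starProjection_eq_iff_forall_norm_sub_le (Submodule.mem_map_of_mem hQ),
    polyMulSpace]
  simp only [Submodule.mem_map, forall_exists_index, and_imp, forall_apply_eq_imp_iff₂,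
    norm_sub_rev one]

theorem existsUnique_isOpa {f : H2} (hf : f ≠ 0) (n : ℕ) : ∃! Q : ℂ[X], IsOpa n f Q := by
  obtain ⟨Q, hQ, hQf⟩ := Submodule.mem_map.1 ((polyMulSpace n f).starProjection_apply_mem one)
  refine ⟨Q, isOpa_iff_starProjection_eq.2 ⟨hQ, hQf.symm⟩, fun Q' hQ' => ?_⟩
  exact polyMul_injective hf ((isOpa_iff_starProjection_eq.1 hQ').2.symm.trans hQf.symm)

theorem isOpa_opa {f : H2} (hf : f ≠ 0) (n : ℕ) : IsOpa n f (opa n f) := by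
  rw [opa, dif_pos (existsUnique_isOpa hf n)]
  exact (existsUnique_isOpa hf n).choose_spec.1

theorem opa_eq_of_isOpa {f : H2} (hf : f ≠ 0) {n : ℕ} {Q : ℂ[X]} (hQ : IsOpa n f Q) :
    opa n f = Q :=
  (existsUnique_isOpa hf n).unique (isOpa_opa hf n) hQ

theorem polyMul_opa {f : H2} (hf : f ≠ 0) (n : ℕ) :
    polyMul f (opa n f) = (polyMulSpace n f).starProjection one :=
  (isOpa_iff_starProjection_eq.1 (isOpa_opa hf n)).2.symm

theorem polyMul_convSeq (g : ℕ → ℂ) (u : H2) (q : ℂ[X]) (hu : Memℓp (convSeq g u) 2)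
    (hqu : Memℓp (convSeq g (polyMul u q)) 2) :
    polyMul ⟨convSeq g u, hu⟩ q = ⟨convSeq g (polyMul u q), hqu⟩ :=
  lp.ext (coeffMul_convSeq q g u)

theorem inner_convSeq_one (g : ℕ → ℂ) (u : H2) (hu : Memℓp (convSeq g u) 2) :
    ⟪(⟨convSeq g u, hu⟩ : H2), one⟫_ℂ = ⟪u, conj (g 0) • one⟫_ℂ := by
  simp [one, lp.inner_single_right, convSeq]

end H2

open H2

/-- If `g` is inner (multiplication by `g` is an isometry of `H²`;
here `g` is given by its Taylor-coefficient sequence, so `g(0) = g 0`) and `f ∈ H²`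
is nonzero, then `Q_n(1/(fg)) = conj (g 0) • Q_n(1/f)` for every `n`. -/
theorem opa_inner_multiple (f : H2) (hf : f ≠ 0) (g : ℕ → ℂ)
    (hmem : ∀ h : H2, Memℓp (convSeq g (fun k => h k)) 2)
    (hiso : ∀ h : H2, ‖(⟨convSeq g (fun k => h k), hmem h⟩ : H2)‖ = ‖h‖)
    (n : ℕ) :
    opa n (⟨convSeq g (fun k => f k), hmem f⟩ : H2) =
      Polynomial.C ((starRingEnd ℂ) (g 0)) * opa n f := by
  have hopa := isOpa_opa hf n
  have hgf : (⟨convSeq g (fun k => f k), hmem f⟩ : H2) ≠ 0 := by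
    rw [← norm_ne_zero_iff, hiso]
    exact norm_ne_zero_iff.2 hf
  rw [← smul_eq_C_mul]
  refine opa_eq_of_isOpa hgf ⟨(degree_smul_le _ _).trans hopa.1, fun q hq => ?_⟩
  rw [h2ErrNorm_eq_norm, h2ErrNorm_eq_norm, polyMul_convSeq g f _ (hmem f) (hmem _),
    polyMul_convSeq g f _ (hmem f) (hmem _),
    norm_sub_le_norm_sub_iff_of_norm_eq_of_inner_eq hiso (inner_convSeq_one g · (hmem _)),
    map_smul, polyMul_opa hf, ← map_smul, norm_sub_rev, norm_sub_rev (polyMul f q)]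
  exact (polyMulSpace n f).norm_sub_starProjection_le _
    (Submodule.mem_map_of_mem (mem_degreeLE.2 hq))

end
end

section
/- Let E ⊆ 𝕋 be closed, let g ∈ C(E), let ε > 0 and let m ∈ ℕ. Then the set { f ∈ H² \ {0} : ‖Q_m(1/f) − g‖_{C(E)} < ε } is open in H². -/
open MeasureTheory Filter Metric Polynomial

noncomputable section

/-! For `f ≠ 0` the shifts `f, z f, …, zᵐ f` are linearly independent in `H²` (power series
have no zero divisors), so `Q_m(1/f)` is the least-squares solution of `∑ⱼ cⱼ zʲ f ≈ 1`: its
coefficients are `G(f)⁻¹ b(f)`, where `G(f)` is the Gram matrix of the shifts and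
`b(f) = (⟨zʲ f, 1⟩)ⱼ`. These depend continuously on `f` wherever `det G(f) ≠ 0`, so
`f ↦ Q_m(1/f)|_E` is continuous from `H² \ {0}` into `C(E)`, and the set in question is the
preimage of an open ball. -/

open scoped InnerProductSpace Matrix

section LeastSquares

variable {𝕜 E ι : Type*} [RCLike 𝕜] [NormedAddCommGroup E] [InnerProductSpace 𝕜 E]
  [Fintype ι]

variable (𝕜) in
def leastSquaresCoeff [DecidableEq ι] (v : ι → E) (e : E) : ι → 𝕜 :=
  (Matrix.gram 𝕜 v)⁻¹ *ᵥ fun i => ⟪v i, e⟫_𝕜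

lemma inner_sum_smul_eq_gram_mulVec (v : ι → E) (c : ι → 𝕜) (i : ι) :
    ⟪v i, ∑ j, c j • v j⟫_𝕜 = (Matrix.gram 𝕜 v *ᵥ c) i := by
  simp only [inner_sum, inner_smul_right, Matrix.mulVec, dotProduct, Matrix.gram_apply, mul_comm]

variable [DecidableEq ι] {v : ι → E}

lemma inner_leastSquares_residual (hv : LinearIndependent 𝕜 v) (e : E) (i : ι) :
    ⟪v i, ∑ j, leastSquaresCoeff 𝕜 v e j • v j - e⟫_𝕜 = 0 := by
  have hG : IsUnit (Matrix.gram 𝕜 v).det :=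
    isUnit_iff_ne_zero.2 (Matrix.det_gram_ne_zero_iff_linearIndependent.2 hv)
  rw [inner_sub_right, inner_sum_smul_eq_gram_mulVec, leastSquaresCoeff, Matrix.mulVec_mulVec,
    Matrix.mul_nonsing_inv _ hG, Matrix.one_mulVec, sub_self]

lemma norm_sq_sum_smul_sub_eq (hv : LinearIndependent 𝕜 v) (e : E) (c : ι → 𝕜) :
    ‖∑ j, c j • v j - e‖ ^ 2 = ‖∑ j, (c j - leastSquaresCoeff 𝕜 v e j) • v j‖ ^ 2
      + ‖∑ j, leastSquaresCoeff 𝕜 v e j • v j - e‖ ^ 2 := by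
  have hperp : ⟪∑ j, (c j - leastSquaresCoeff 𝕜 v e j) • v j,
      ∑ j, leastSquaresCoeff 𝕜 v e j • v j - e⟫_𝕜 = 0 := by
    simp only [sum_inner, inner_smul_left, inner_leastSquares_residual hv, mul_zero,
      Finset.sum_const_zero]
  have hsplit : ∑ j, c j • v j - e = ∑ j, (c j - leastSquaresCoeff 𝕜 v e j) • v j
      + (∑ j, leastSquaresCoeff 𝕜 v e j • v j - e) := by
    simp only [sub_smul, Finset.sum_sub_distrib]; abel
  rw [hsplit, sq, sq, sq, norm_add_sq_eq_norm_sq_add_norm_sq_of_inner_eq_zero _ _ hperp]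

lemma norm_leastSquares_le (hv : LinearIndependent 𝕜 v) (e : E) (c : ι → 𝕜) :
    ‖∑ j, leastSquaresCoeff 𝕜 v e j • v j - e‖ ≤ ‖∑ j, c j • v j - e‖ := by
  refine le_of_sq_le_sq ?_ (norm_nonneg _)
  rw [norm_sq_sum_smul_sub_eq hv e c]
  exact le_add_of_nonneg_left (sq_nonneg _)

lemma eq_leastSquaresCoeff_of_norm_le (hv : LinearIndependent 𝕜 v) (e : E) {c : ι → 𝕜}
    (hc : ‖∑ j, c j • v j - e‖ ≤ ‖∑ j, leastSquaresCoeff 𝕜 v e j • v j - e‖) :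
    c = leastSquaresCoeff 𝕜 v e := by
  have hzero : ∑ j, (c j - leastSquaresCoeff 𝕜 v e j) • v j = 0 := by
    have hpyth := norm_sq_sum_smul_sub_eq hv e c
    have hsq := pow_le_pow_left₀ (norm_nonneg _) hc 2
    rw [← norm_eq_zero, ← sq_eq_zero_iff]
    exact le_antisymm (by linarith) (sq_nonneg _)
  funext j
  exact sub_eq_zero.1 (Fintype.linearIndependent_iff.1 hv _ hzero j)

lemma continuousOn_leastSquaresCoeff {X : Type*} [TopologicalSpace X] {v : X → ι → E}
    (hv : ∀ i, Continuous fun x => v x i) (e : E) :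
    ContinuousOn (fun x => leastSquaresCoeff 𝕜 (v x) e) {x | LinearIndependent 𝕜 (v x)} := by
  intro x hx
  have hgram : Continuous fun x => Matrix.gram 𝕜 (v x) :=
    continuous_matrix fun i j => (hv i).inner (hv j)
  have hinv : ContinuousAt (fun x => (Matrix.gram 𝕜 (v x))⁻¹) x := by
    refine (continuousAt_matrix_inv _ ?_).comp hgram.continuousAt
    rw [Ring.inverse_eq_inv']
    exact continuousAt_inv₀ (Matrix.det_gram_ne_zero_iff_linearIndependent.2 hx)
  have hb : Continuous fun x => fun i => ⟪v x i, e⟫_𝕜 :=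
    continuous_pi fun i => (hv i).inner continuous_const
  have hmulVec : Continuous fun p : Matrix ι ι 𝕜 × (ι → 𝕜) => p.1 *ᵥ p.2 :=
    continuous_fst.matrix_mulVec continuous_snd
  exact (hmulVec.continuousAt.comp (hinv.prodMk hb.continuousAt)).continuousWithinAt

end LeastSquares

namespace lp

variable {ι : Type*} {G : ι → Type*} [∀ i, NormedAddCommGroup (G i)]

lemma summable_norm_sq (f : lp G 2) : Summable fun i => ‖f i‖ ^ 2 := by
  simpa using (lp.memℓp f).summable (by norm_num : 0 < (2 : ENNReal).toReal)

lemma norm_eq_sqrt_tsum_norm_sq (f : lp G 2) : ‖f‖ = Real.sqrt (∑' i, ‖f i‖ ^ 2) := by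
  rw [lp.norm_eq_tsum_rpow (by norm_num : 0 < (2 : ENNReal).toReal), Real.sqrt_eq_rpow]
  simp

end lp

section Shift

variable {𝕜 E : Type*} [NormedField 𝕜] [NormedAddCommGroup E] [NormedSpace 𝕜 E]

def shiftSeq (i : ℕ) (a : ℕ → E) (n : ℕ) : E := if i ≤ n then a (n - i) else 0

lemma shiftSeq_add (i : ℕ) (a : ℕ → E) (n : ℕ) : shiftSeq i a (n + i) = a n := by
  simp [shiftSeq]

lemma sum_range_norm_sq_shiftSeq (i : ℕ) (a : ℕ → E) :
    ∑ n ∈ Finset.range i, ‖shiftSeq i a n‖ ^ 2 = 0 :=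
  Finset.sum_eq_zero fun n hn => by simp [shiftSeq, (Finset.mem_range.1 hn).not_ge]

lemma summable_norm_sq_shiftSeq (i : ℕ) (f : lp (fun _ : ℕ => E) 2) :
    Summable fun n => ‖shiftSeq i f n‖ ^ 2 :=
  (summable_nat_add_iff i).1 (by simpa only [shiftSeq_add] using lp.summable_norm_sq f)

variable (𝕜 E) in
def lp.shift (i : ℕ) : lp (fun _ : ℕ => E) 2 →ₗᵢ[𝕜] lp (fun _ : ℕ => E) 2 where
  toFun f := ⟨shiftSeq i f, memℓp_gen (by simpa using summable_norm_sq_shiftSeq i f)⟩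
  map_add' f g := by
    ext n
    show shiftSeq i ⇑(f + g) n = shiftSeq i f n + shiftSeq i g n
    by_cases h : i ≤ n <;> simp [shiftSeq, h]
  map_smul' c f := by
    ext n
    show shiftSeq i ⇑(c • f) n = c • shiftSeq i f n
    by_cases h : i ≤ n <;> simp [shiftSeq, h]
  norm_map' f := by
    rw [lp.norm_eq_sqrt_tsum_norm_sq, lp.norm_eq_sqrt_tsum_norm_sq]
    congr 1
    show ∑' n, ‖shiftSeq i f n‖ ^ 2 = _
    rw [← (summable_norm_sq_shiftSeq i f).sum_add_tsum_nat_add i, sum_range_norm_sq_shiftSeq,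
      zero_add]
    simp only [shiftSeq_add]

lemma lp.shift_apply (i : ℕ) (f : lp (fun _ : ℕ => E) 2) (n : ℕ) :
    lp.shift 𝕜 E i f n = if i ≤ n then f (n - i) else 0 := rfl

end Shift

namespace Polynomial

variable {R : Type*} [Semiring R]

variable (R) in
def ofCoeffs (m : ℕ) : (Fin (m + 1) → R) →ₗ[R] R[X] :=
  (degreeLT R (m + 1)).subtype ∘ₗ (degreeLTEquiv R (m + 1)).symm.toLinearMap

lemma degree_ofCoeffs_le (m : ℕ) (c : Fin (m + 1) → R) : (ofCoeffs R m c).degree ≤ m := by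
  rw [← mem_degreeLE, ← degreeLT_succ_eq_degreeLE]; exact Submodule.coe_mem _

lemma ofCoeffs_coeff {m : ℕ} {q : R[X]} (hq : q.degree ≤ m) :
    ofCoeffs R m (fun j => q.coeff j) = q := by
  have hq' : q ∈ degreeLT R (m + 1) := by rwa [degreeLT_succ_eq_degreeLE, mem_degreeLE]
  exact congrArg Subtype.val ((degreeLTEquiv R (m + 1)).symm_apply_apply ⟨q, hq'⟩)

lemma ofCoeffs_injective (m : ℕ) : Function.Injective (ofCoeffs R m) :=
  Subtype.val_injective.comp (degreeLTEquiv R (m + 1)).symm.injective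

lemma coe_ofCoeffs (m : ℕ) (c : Fin (m + 1) → R) :
    (ofCoeffs R m c : PowerSeries R) = ∑ j, c j • PowerSeries.X ^ (j : ℕ) := by
  change ((∑ j : Fin (m + 1), monomial j (c j) : R[X]) : PowerSeries R) = _
  rw [← coeToPowerSeries.ringHom_apply, map_sum]
  simp only [← smul_X_eq_monomial, coeToPowerSeries.ringHom_apply, coe_smul, coe_pow, coe_X]

lemma continuous_toContinuousMapOn_ofCoeffs {𝕜 : Type*} [NontriviallyNormedField 𝕜]
    [CompleteSpace 𝕜] (m : ℕ) (E : Set 𝕜) :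
    Continuous fun c => (ofCoeffs 𝕜 m c).toContinuousMapOn E :=
  ((toContinuousMapOnAlgHom E).toLinearMap ∘ₗ ofCoeffs 𝕜 m).continuous_of_finiteDimensional

end Polynomial

namespace H2

def toPowerSeries : H2 →ₗ[ℂ] PowerSeries ℂ where
  toFun f := PowerSeries.mk f
  map_add' f g := by ext n; simp only [map_add, PowerSeries.coeff_mk]; rfl
  map_smul' c f := by ext; simp

lemma coeff_toPowerSeries (f : H2) (n : ℕ) : PowerSeries.coeff n (toPowerSeries f) = f n :=
  PowerSeries.coeff_mk _ _

lemma toPowerSeries_injective : Function.Injective toPowerSeries := fun f g h => by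
  ext n; simpa only [coeff_toPowerSeries] using congrArg (PowerSeries.coeff n) h

lemma toPowerSeries_shift (i : ℕ) (f : H2) :
    toPowerSeries (lp.shift ℂ ℂ i f) = PowerSeries.X ^ i * toPowerSeries f := by
  ext n
  rw [PowerSeries.coeff_X_pow_mul', coeff_toPowerSeries, coeff_toPowerSeries, lp.shift_apply]

lemma toPowerSeries_single_zero : toPowerSeries (lp.single 2 0 1) = 1 := by
  ext n
  rw [coeff_toPowerSeries, lp.single_apply, PowerSeries.coeff_one]
  by_cases h : n = 0 <;> simp [h]

variable {m : ℕ}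

lemma toPowerSeries_sum_smul_shift (c : Fin (m + 1) → ℂ) (f : H2) :
    toPowerSeries (∑ j, c j • lp.shift ℂ ℂ j f) = ofCoeffs ℂ m c * toPowerSeries f := by
  simp only [map_sum, map_smul, toPowerSeries_shift, coe_ofCoeffs, Finset.sum_mul, smul_mul_assoc]

lemma linearIndependent_shift {f : H2} (hf : f ≠ 0) :
    LinearIndependent ℂ fun j : Fin (m + 1) => lp.shift ℂ ℂ j f := by
  refine Fintype.linearIndependent_iff.2 fun c hc => ?_
  have hf' : toPowerSeries f ≠ 0 := (map_ne_zero_iff _ toPowerSeries_injective).2 hf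
  have hprod := toPowerSeries_sum_smul_shift c f
  rw [hc, map_zero, eq_comm, mul_eq_zero, coe_eq_zero_iff, ← map_zero (ofCoeffs ℂ m)] at hprod
  exact congrFun (ofCoeffs_injective m (hprod.resolve_right hf'))

end H2

lemma errSeq_eq_coeff (q : ℂ[X]) (f : H2) (n : ℕ) :
    errSeq q f n = PowerSeries.coeff n ((q : PowerSeries ℂ) * H2.toPowerSeries f - 1) := by
  rw [errSeq, coeffMul, map_sub, PowerSeries.coeff_mul, PowerSeries.coeff_one,
    Finset.Nat.sum_antidiagonal_eq_sum_range_succ_mk]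
  simp only [coeff_coe, H2.coeff_toPowerSeries]

lemma h2ErrNorm_ofCoeffs {m : ℕ} (c : Fin (m + 1) → ℂ) (f : H2) :
    h2ErrNorm (ofCoeffs ℂ m c) f = ‖∑ j, c j • lp.shift ℂ ℂ j f - lp.single 2 0 1‖ := by
  rw [h2ErrNorm, lp.norm_eq_sqrt_tsum_norm_sq]
  congr with n
  rw [errSeq_eq_coeff, ← H2.toPowerSeries_sum_smul_shift, ← H2.toPowerSeries_single_zero,
    ← map_sub, H2.coeff_toPowerSeries]

theorem opa_eq_ofCoeffs {m : ℕ} {f : H2} (hf : f ≠ 0) :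
    opa m f = ofCoeffs ℂ m
      (leastSquaresCoeff ℂ (fun j : Fin (m + 1) => lp.shift ℂ ℂ j f) (lp.single 2 0 1)) := by
  set P := ofCoeffs ℂ m
    (leastSquaresCoeff ℂ (fun j : Fin (m + 1) => lp.shift ℂ ℂ j f) (lp.single 2 0 1))
  have hli := H2.linearIndependent_shift (m := m) hf
  have hP : IsOpa m f P := by
    refine ⟨degree_ofCoeffs_le m _, fun q hq => ?_⟩
    rw [← ofCoeffs_coeff hq, h2ErrNorm_ofCoeffs, h2ErrNorm_ofCoeffs]
    exact norm_leastSquares_le hli _ _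
  have huniq : ∀ Q, IsOpa m f Q → Q = P := by
    intro Q hQ
    have hle := hQ.2 P (degree_ofCoeffs_le m _)
    rw [← ofCoeffs_coeff hQ.1, h2ErrNorm_ofCoeffs, h2ErrNorm_ofCoeffs] at hle
    rw [← ofCoeffs_coeff hQ.1, eq_leastSquaresCoeff_of_norm_le hli _ hle]
  have hex : ∃! Q, IsOpa m f Q := ⟨P, hP, huniq⟩
  rw [opa, dif_pos hex]
  exact huniq _ hex.choose_spec.1

theorem continuousOn_opa_toContinuousMapOn (m : ℕ) (E : Set ℂ) :
    ContinuousOn (fun f => (opa m f).toContinuousMapOn E) {f | f ≠ 0} := by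
  have hcoeff : ContinuousOn
      (fun f => leastSquaresCoeff ℂ (fun j : Fin (m + 1) => lp.shift ℂ ℂ j f) (lp.single 2 0 1))
      {f | f ≠ 0} :=
    (continuousOn_leastSquaresCoeff (fun j : Fin (m + 1) => (lp.shift ℂ ℂ j).continuous) _).mono
      fun f hf => H2.linearIndependent_shift hf
  refine ((continuous_toContinuousMapOn_ofCoeffs m E).comp_continuousOn hcoeff).congr
    fun f hf => ?_
  simp only [Function.comp_apply, opa_eq_ofCoeffs hf]

lemma supDist_eval_eq_dist {E : Set ℂ} [CompactSpace E] {g : ℂ → ℂ} (hg : ContinuousOn g E)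
    (p : ℂ[X]) :
    supDist E p.eval g = dist (p.toContinuousMapOn E) ⟨E.domRestrict g, hg.domRestrict⟩ := by
  rw [dist_eq_norm, ContinuousMap.norm_eq_iSup_norm]
  rfl

theorem isOpen_opa_close_general (E : Set ℂ) (hE : E ⊆ sphere (0 : ℂ) 1) (hEclosed : IsClosed E)
    (g : ℂ → ℂ) (hg : ContinuousOn g E) (ε : ℝ) (m : ℕ) :
    IsOpen {f : H2 | f ≠ 0 ∧ supDist E (fun z => (opa m f).eval z) g < ε} := by
  have : CompactSpace E := isCompact_iff_compactSpace.1 <|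
    isCompact_of_isClosed_isBounded hEclosed (isBounded_sphere.subset hE)
  simp only [supDist_eval_eq_dist hg]
  exact (continuousOn_opa_toContinuousMapOn m E).isOpen_inter_preimage isOpen_ne isOpen_ball

/-- For closed `E ⊆ 𝕋`, `g ∈ C(E)`, `ε > 0` and `m ∈ ℕ`, the set
`{f ∈ H² \ {0} : ‖Q_m(1/f) − g‖_{C(E)} < ε}` is open in `H²`. -/
theorem isOpen_opa_close (E : Set ℂ) (hE : E ⊆ sphere (0 : ℂ) 1) (hEclosed : IsClosed E)
    (g : ℂ → ℂ) (hg : ContinuousOn g E) (ε : ℝ) (hε : 0 < ε) (m : ℕ) :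
    IsOpen {f : H2 | f ≠ 0 ∧ supDist E (fun z => (opa m f).eval z) g < ε} :=
  isOpen_opa_close_general E hE hEclosed g hg ε m

end
end
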